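/- arXiv:0903.4614 — 3 statements merged into one kernel-verified Lean document; each statement's English description precedes it below -/
import Mathlib

section
/- Let p/q be a positive irreducible fraction with p even and p, q > 0, and let p/q = [a_0, a_1, ..., a_n] be its standard continued fraction expansion. Define the mother M(p/q) = [a_0, a_1, ..., a_{n-1}, a_n - 2]. Then M(p/q) is a non-negative rational number whose irreducible representation r/s has r even, and d(p/q, M(p/q)) = 2. -/
/-- Evaluate the continued fraction `[a_0, …, a_{n-1}, x]` projectively:
the pair `(u, w)` represents the fraction `u/w` (with `(±1, 0)` representing
`∞`), and `[a, rest] = a + 1/rest` corresponds to `(u,w) ↦ (a*u + w, u)`. -/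
def cfFold (l : List ℤ) (x : ℤ × ℤ) : ℤ × ℤ :=
  l.foldr (fun a y => (a * y.1 + y.2, y.1)) x

/-- The coprime pair `(numerator, denominator)` of the continued fraction
`[a_0, …, a_n]`; the empty continued fraction is `∞ = (1, 0)`. -/
def cfPair (l : List ℤ) : ℤ × ℤ :=
  cfFold l (1, 0)

/-- The rational number represented by a pair. -/
def pairQ (x : ℤ × ℤ) : ℚ :=
  (x.1 : ℚ) / (x.2 : ℚ)

/-- The value of the continued fraction `[a_0, …, a_n]` as a rational number. -/
def cfVal (l : List ℤ) : ℚ :=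
  pairQ (cfPair l)

/-- `l = [a_0, …, a_n]` is a standard continued fraction expansion:
`a_0 ≥ 0`, `a_i ≥ 1` for `1 ≤ i ≤ n`, and `a_n ≥ 2`. -/
def IsStdCF (l : List ℤ) : Prop :=
  l ≠ [] ∧ 0 ≤ l.head! ∧ (∀ b ∈ l.tail, 1 ≤ b) ∧ 2 ≤ l.getLast!

/-! The map `x ↦ cfPair (l ++ [x])` is affine with slope `cfPair l = (A, C)`, so the mother of `p/q`
is `(p, q) - 2 • cfPair l`. Each step of the fold acts by a matrix of determinant `-1`, which
preserves `pairDist` and coprimality; consecutive convergents are at distance `1`, hence the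
mother is at distance `2` and in lowest terms. Its numerator `p - 2A` is even and its
denominator `q - 2C` is odd (as `q` is coprime to the even `p`), so nonzero. -/

/-- The distance `d(p/q, r/s) = |p s - r q|` between two fractions given as pairs. -/
def pairDist (x y : ℤ × ℤ) : ℤ :=
  |x.1 * y.2 - y.1 * x.2|

theorem pairDist_sub_smul (x y : ℤ × ℤ) (c : ℤ) :
    pairDist x (x - c • y) = |c| * pairDist x y := by
  simp only [pairDist, Prod.fst_sub, Prod.snd_sub, Prod.smul_fst, Prod.smul_snd, smul_eq_mul]
  rw [← abs_mul, ← abs_neg]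
  congr 1
  ring

theorem cfFold_cons (a : ℤ) (l : List ℤ) (x : ℤ × ℤ) :
    cfFold (a :: l) x = (a * (cfFold l x).1 + (cfFold l x).2, (cfFold l x).1) :=
  rfl

theorem cfPair_append_singleton (l : List ℤ) (x : ℤ) : cfPair (l ++ [x]) = cfFold l (x, 1) := by
  simp [cfPair, cfFold, List.foldr_append]

theorem cfFold_sub_smul (l : List ℤ) (u v : ℤ × ℤ) (c : ℤ) :
    cfFold l (u - c • v) = cfFold l u - c • cfFold l v := by
  induction l with
  | nil => rfl
  | cons a l ih =>
    simp only [cfFold_cons, ih, Prod.fst_sub, Prod.snd_sub, Prod.smul_fst, Prod.smul_snd,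
      smul_eq_mul, Prod.mk_sub_mk, Prod.smul_mk]
    congr 1
    ring

theorem cfPair_append_sub (l : List ℤ) (x c : ℤ) :
    cfPair (l ++ [x - c]) = cfPair (l ++ [x]) - c • cfPair l := by
  rw [cfPair_append_singleton, cfPair_append_singleton, cfPair, ← cfFold_sub_smul]
  simp

theorem pairDist_cfFold (l : List ℤ) (u v : ℤ × ℤ) :
    pairDist (cfFold l u) (cfFold l v) = pairDist u v := by
  induction l with
  | nil => rfl
  | cons a l ih =>
    rw [← ih, pairDist, pairDist, cfFold_cons, cfFold_cons, ← abs_neg]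
    congr 1
    ring

theorem pairDist_cfPair_append_singleton (l : List ℤ) (x : ℤ) :
    pairDist (cfPair (l ++ [x])) (cfPair l) = 1 := by
  rw [cfPair_append_singleton, cfPair, pairDist_cfFold]
  simp [pairDist]

theorem isCoprime_cfFold (l : List ℤ) {x : ℤ × ℤ} (hx : IsCoprime x.1 x.2) :
    IsCoprime (cfFold l x).1 (cfFold l x).2 := by
  induction l with
  | nil => exact hx
  | cons a l ih => simpa [cfFold_cons] using ih.symm

theorem isCoprime_cfPair (l : List ℤ) : IsCoprime (cfPair l).1 (cfPair l).2 :=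
  isCoprime_cfFold l isCoprime_one_left

theorem cfFold_nonneg {l : List ℤ} (hl : ∀ b ∈ l, 0 ≤ b) {x : ℤ × ℤ} (hx : 0 ≤ x) :
    0 ≤ cfFold l x := by
  induction l with
  | nil => exact hx
  | cons a l ih =>
    obtain ⟨h1, h2⟩ : (0 : ℤ) ≤ (cfFold l x).1 ∧ (0 : ℤ) ≤ (cfFold l x).2 :=
      ih fun b hb => hl b (List.mem_cons_of_mem a hb)
    have ha : 0 ≤ a := hl a List.mem_cons_self
    exact ⟨by rw [cfFold_cons]; positivity, h1⟩

theorem cfPair_nonneg {l : List ℤ} (hl : ∀ b ∈ l, 0 ≤ b) : 0 ≤ cfPair l :=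
  cfFold_nonneg hl (by decide)

theorem IsStdCF.nonneg {l : List ℤ} (h : IsStdCF l) : ∀ b ∈ l, 0 ≤ b := by
  obtain ⟨hne, hhead, htail, -⟩ := h
  obtain ⟨a, t, rfl⟩ := List.exists_cons_of_ne_nil hne
  intro b hb
  rcases List.mem_cons.1 hb with rfl | hb
  · exact hhead
  · exact zero_le_one.trans (htail b hb)

theorem IsStdCF.two_le_of_append_singleton {l : List ℤ} {a : ℤ} (h : IsStdCF (l ++ [a])) :
    2 ≤ a := by
  simpa [List.getLast!_of_getLast? List.getLast?_concat] using h.2.2.2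

theorem odd_of_two_dvd_of_gcd_eq_one {p q : ℤ} (hco : Int.gcd p q = 1) (hev : 2 ∣ p) : Odd q := by
  rw [← Int.not_even_iff_odd, even_iff_two_dvd]
  intro hq
  simpa [hco] using Int.dvd_coe_gcd hev hq

theorem mother_nonneg_even_dist_two_general (p q : ℤ)
    (hco : Int.gcd p q = 1) (hev : 2 ∣ p)
    (l : List ℤ) (a : ℤ) (hstd : IsStdCF (l ++ [a]))
    (hval : cfPair (l ++ [a]) = (p, q)) :
    0 ≤ (cfPair (l ++ [a - 2])).1 ∧ 0 < (cfPair (l ++ [a - 2])).2 ∧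
    2 ∣ (cfPair (l ++ [a - 2])).1 ∧
    Int.gcd (cfPair (l ++ [a - 2])).1 (cfPair (l ++ [a - 2])).2 = 1 ∧
    |p * (cfPair (l ++ [a - 2])).2 - (cfPair (l ++ [a - 2])).1 * q| = 2 := by
  have hmother : cfPair (l ++ [a - 2]) = (p, q) - (2 : ℤ) • cfPair l :=
    hval ▸ cfPair_append_sub l a 2
  have hnonneg : 0 ≤ cfPair (l ++ [a - 2]) := by
    refine cfPair_nonneg fun b hb => ?_
    rcases List.mem_append.1 hb with hb | hb
    · exact hstd.nonneg b (List.mem_append_left _ hb)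
    · linarith [List.mem_singleton.1 hb, hstd.two_le_of_append_singleton]
  have hodd : Odd (cfPair (l ++ [a - 2])).2 := by
    rw [hmother]
    exact (odd_of_two_dvd_of_gcd_eq_one hco hev).sub_even (even_two_mul _)
  obtain ⟨hr, hs⟩ : 0 ≤ (cfPair (l ++ [a - 2])).1 ∧ 0 ≤ (cfPair (l ++ [a - 2])).2 := hnonneg
  have hpos : 0 < (cfPair (l ++ [a - 2])).2 :=
    hs.lt_of_ne' fun h => Int.not_odd_zero (h ▸ hodd)
  refine ⟨hr, hpos, ?_, Int.isCoprime_iff_gcd_eq_one.1 (isCoprime_cfPair _), ?_⟩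
  · rw [hmother]
    exact dvd_sub hev (dvd_mul_right 2 _)
  · change pairDist (p, q) (cfPair (l ++ [a - 2])) = 2
    rw [hmother, pairDist_sub_smul, ← hval, pairDist_cfPair_append_singleton]
    norm_num

/-- (Lemma on the mother `M(p/q)`.)  Let `p/q` be a positive irreducible
fraction with `p` even, with standard continued fraction expansion
`[a_0, …, a_{n-1}, a_n]` (the list `l ++ [a]`).  Then the mother
`M(p/q) = [a_0, …, a_{n-1}, a_n - 2]`, given in lowest terms by
`cfPair (l ++ [a-2]) = (r, s)`, is a non-negative rational number
(`0 ≤ r`, `0 < s`), its numerator `r` is even, and `d(p/q, M(p/q)) = 2`. -/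
theorem mother_nonneg_even_dist_two (p q : ℤ) (hp : 0 < p) (hq : 0 < q)
    (hco : Int.gcd p q = 1) (hev : 2 ∣ p)
    (l : List ℤ) (a : ℤ) (hstd : IsStdCF (l ++ [a]))
    (hval : cfPair (l ++ [a]) = (p, q)) :
    0 ≤ (cfPair (l ++ [a - 2])).1 ∧ 0 < (cfPair (l ++ [a - 2])).2 ∧
    2 ∣ (cfPair (l ++ [a - 2])).1 ∧
    Int.gcd (cfPair (l ++ [a - 2])).1 (cfPair (l ++ [a - 2])).2 = 1 ∧
    |p * (cfPair (l ++ [a - 2])).2 - (cfPair (l ++ [a - 2])).1 * q| = 2 :=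
  mother_nonneg_even_dist_two_general p q hco hev l a hstd hval
end

section
/- For t an odd integer with t ≤ -5 and [a_0, ..., a_n] a standard continued fraction expansion, one has the identity [a_0, ..., a_{n-1}, a_n + 2/t] = [a_0, ..., a_{n-1}, a_n - 1, 1, (-t-3)/2, 2] as rational numbers. -/
/-- The coprime-up-to-sign pair representing the continued fraction
`[a_0, …, a_{n-1}, a_n + 2/t]` with rational last entry
`a + 2/t = (a*t + 2)/t` (for odd `t` the pair `(a*t + 2, t)` is coprime). -/
def childPair (l : List ℤ) (a t : ℤ) : ℤ × ℤ :=
  cfFold l (a * t + 2, t)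

lemma cfFold_append (l m : List ℤ) (x : ℤ × ℤ) :
    cfFold (l ++ m) x = cfFold l (cfFold m x) := by
  simp [cfFold, List.foldr_append]

lemma cfFold_neg (l : List ℤ) (x : ℤ × ℤ) :
    cfFold l (-x.1, -x.2) = (-(cfFold l x).1, -(cfFold l x).2) := by
  induction l with
  | nil => simp [cfFold]
  | cons a l ih => simp [cfFold, List.foldr_cons] at ih ⊢; rw [ih]; exact ⟨by ring, rfl⟩

/-- For an odd integer `t ≤ -5` and a standard continued fraction expansion
`l ++ [a]`, one has the identity of rational numbers (stated by
cross-multiplication of the representing pairs)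
`[a_0, …, a_{n-1}, a + 2/t] = [a_0, …, a_{n-1}, a - 1, 1, (-t-3)/2, 2]`. -/
theorem child_cf_identity (l : List ℤ) (a t : ℤ)
    (hstd : IsStdCF (l ++ [a])) (ht : Odd t) (ht5 : t ≤ -5) :
    (childPair l a t).1 * (cfPair (l ++ [a - 1, 1, (-t - 3) / 2, 2])).2
      = (cfPair (l ++ [a - 1, 1, (-t - 3) / 2, 2])).1 * (childPair l a t).2 := by
  obtain ⟨k, hk⟩ := ht
  have hs : (-t - 3) / 2 = -k - 2 := by omega
  have key : cfPair (l ++ [a - 1, 1, (-t - 3) / 2, 2])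
      = (-(childPair l a t).1, -(childPair l a t).2) := by
    rw [cfPair, cfFold_append, childPair, hs]
    have : cfFold [a - 1, 1, -k - 2, 2] (1, 0) = (-(a * t + 2), -t) := by
      simp [cfFold]; subst hk; constructor <;> ring
    rw [this]
    exact cfFold_neg l (a * t + 2, t)
  rw [key]; ring
end

section
/- The graph D_2, whose vertices are irreducible fractions p/q with p even (0/1 being a vertex) and whose edges connect p/q and r/s exactly when |ps - rq| = 2, is a tree: it is connected and contains no cycle. -/
/-- The graph `𝔻₂`: vertices are the rational numbers whose irreducible
fraction `p/q` has `p` even (`∞ = 1/0` is excluded since `1` is odd);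
two vertices `p/q` and `r/s` are adjacent exactly when the distance
`d(p/q, r/s) = |p*s - r*q|` equals `2`. -/
def D2 : SimpleGraph {x : ℚ // (2 : ℤ) ∣ x.num} where
  Adj x y := |x.1.num * (y.1.den : ℤ) - y.1.num * (x.1.den : ℤ)| = 2
  symm := by
    constructor
    intro x y h
    rw [abs_sub_comm]
    exact h
  loopless := by
    constructor
    intro x h
    simp at h

namespace D2Aux

lemma s_le_q (p q r s : ℤ) (hp : 2 ≤ |p|) (hq : 0 < q) (hs : 0 < s)
    (he : |p * s - r * q| = 2) (hN : |r| + s ≤ |p| + q) : s ≤ q := by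
  have h1 : |p * s| - |p * s - r * q| ≤ |p * s - (p * s - r * q)| :=
    abs_sub_abs_le_abs_sub _ _
  rw [he] at h1
  simp only [sub_sub_cancel] at h1
  rw [abs_mul p s, abs_mul r q, abs_of_pos hs, abs_of_pos hq] at h1
  nlinarith [mul_le_mul_of_nonneg_right hN hq.le, abs_nonneg r, abs_nonneg p]

lemma case_same (p q r s t u c : ℤ)
    (hq : 0 < q) (hpq : IsCoprime p q)
    (hs : 0 < s) (hu : 0 < u) (hsq : s ≤ q) (huq : u ≤ q)
    (h1 : p * s - r * q = c) (h2 : p * u - t * q = c) :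
    r = t ∧ s = u := by
  have hdvd : q ∣ (s - u) := by
    refine hpq.symm.dvd_of_dvd_mul_left ⟨r - t, by linear_combination h1 - h2⟩
  obtain ⟨k, hk⟩ := hdvd
  have hk0 : k = 0 := by
    by_contra h
    rcases lt_or_gt_of_ne h with h | h
    · have h' : q * k ≤ -q := by
        have := mul_le_mul_of_nonneg_left (show k ≤ -1 by omega) hq.le
        linarith
      linarith
    · have h' : q ≤ q * k := by
        have := mul_le_mul_of_nonneg_left (show 1 ≤ k by omega) hq.le
        linarith
      linarith
  rw [hk0, mul_zero] at hk
  have hsu : s = u := by omega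
  subst hsu
  refine ⟨?_, rfl⟩
  have : r * q = t * q := by linarith
  exact mul_right_cancel₀ hq.ne' this

lemma case_diff (p q r s t u : ℤ)
    (hp2 : 2 ∣ p) (hp : 2 ≤ |p|) (hq : 0 < q) (hqodd : ¬ (2:ℤ) ∣ q) (hpq : IsCoprime p q)
    (hs : 0 < s) (hsodd : ¬ (2:ℤ) ∣ s) (hu : 0 < u) (huodd : ¬ (2:ℤ) ∣ u)
    (hsq : s ≤ q) (huq : u ≤ q)
    (h1 : p * s - r * q = 2) (h2 : p * u - t * q = -2)
    (hN1 : |r| + s ≤ |p| + q) (hN2 : |t| + u ≤ |p| + q) : False := by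
  have hdvd : q ∣ (s + u) := by
    refine hpq.symm.dvd_of_dvd_mul_left ⟨r + t, by linear_combination h1 + h2⟩
  obtain ⟨k, hk⟩ := hdvd
  have hkb : k = 1 ∨ k = 2 := by
    by_contra h
    push_neg at h
    rcases lt_trichotomy k 1 with hlt | heq | hgt
    · have h' : q * k ≤ 0 := by
        have := mul_le_mul_of_nonneg_left (show k ≤ 0 by omega) hq.le
        linarith
      linarith
    · omega
    · have h' : 3 * q ≤ q * k := by
        have := mul_le_mul_of_nonneg_left (show 3 ≤ k by omega) hq.le
        linarith
      linarith
  rcases hkb with hk1 | hk2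
  · -- s + u = q, but s + u is even and q is odd
    rw [hk1, mul_one] at hk
    omega
  · -- s = u = q
    rw [hk2] at hk
    have hk' : s + u = 2 * q := by linarith
    have hsq' : s = q := by omega
    have huq' : u = q := by omega
    subst hsq'
    have hq2 : s ∣ 2 := ⟨p - r, by linear_combination -h1⟩
    have hqle : s ≤ 2 := Int.le_of_dvd (by norm_num) hq2
    have hq1 : s = 1 := by omega
    rw [hq1] at h1 h2 hN1 hN2
    rw [hq1] at huq'
    rw [huq'] at h2 hN2
    have hr : r = p - 2 := by linarith
    have ht : t = p + 2 := by linarith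
    subst hr ht
    have e1 : |p - 2| ≤ |p| := by omega
    have e2 : |p + 2| ≤ |p| := by omega
    have s1 : (p - 2)^2 ≤ p^2 := by
      have := pow_le_pow_left₀ (abs_nonneg (p - 2)) e1 2
      simpa [sq_abs] using this
    have s2 : (p + 2)^2 ≤ p^2 := by
      have := pow_le_pow_left₀ (abs_nonneg (p + 2)) e2 2
      simpa [sq_abs] using this
    nlinarith

lemma unique_small (p q r s t u : ℤ)
    (hp2 : 2 ∣ p) (hp0 : p ≠ 0) (hq : 0 < q) (hqodd : ¬ (2:ℤ) ∣ q) (hpq : IsCoprime p q)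
    (hs : 0 < s) (hsodd : ¬ (2:ℤ) ∣ s) (hu : 0 < u) (huodd : ¬ (2:ℤ) ∣ u)
    (he1 : |p * s - r * q| = 2) (he2 : |p * u - t * q| = 2)
    (hN1 : |r| + s ≤ |p| + q) (hN2 : |t| + u ≤ |p| + q) :
    r = t ∧ s = u := by
  have hpabs : 2 ∣ |p| := (dvd_abs 2 p).mpr hp2
  have hp0' : 0 < |p| := abs_pos.mpr hp0
  have hp : 2 ≤ |p| := by omega
  have hsq : s ≤ q := s_le_q p q r s hp hq hs he1 hN1
  have huq : u ≤ q := s_le_q p q t u hp hq hu he2 hN2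
  rcases (abs_eq (by norm_num : (0:ℤ) ≤ 2)).mp he1 with h1 | h1 <;>
    rcases (abs_eq (by norm_num : (0:ℤ) ≤ 2)).mp he2 with h2 | h2
  · exact case_same p q r s t u 2 hq hpq hs hu hsq huq h1 h2
  · exact absurd (case_diff p q r s t u hp2 hp hq hqodd hpq hs hsodd hu huodd hsq huq h1 h2 hN1 hN2) not_false
  · exact absurd (case_diff p q t u r s hp2 hp hq hqodd hpq hu huodd hs hsodd huq hsq h2 h1 hN2 hN1) not_false
  · exact case_same p q r s t u (-2) hq hpq hs hu hsq huq h1 h2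

lemma exists_small_pos (p q : ℤ) (hp2 : 2 ∣ p) (hp : 0 < p) (hq : 0 < q)
    (hqodd : ¬ (2:ℤ) ∣ q) (hcop : IsCoprime p q) :
    ∃ r s : ℤ, 0 < s ∧ 2 ∣ r ∧ Int.gcd r s = 1 ∧ |p * s - r * q| = 2 ∧ |r| + s < p + q := by
  have hp2' : 2 ≤ p := by omega
  by_cases hq1 : q = 1
  · refine ⟨p - 2, 1, one_pos, by omega, by simp [Int.gcd_def], ?_, ?_⟩
    · rw [hq1]; rw [show p * 1 - (p - 2) * 1 = 2 by ring]; norm_num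
    · rw [hq1, abs_of_nonneg (by omega : (0:ℤ) ≤ p - 2)]; omega
  · have hq3 : 3 ≤ q := by omega
    obtain ⟨a, b, hab⟩ := hcop
    set s₁ := (2 * a) % q with hs₁
    have hs1nonneg : 0 ≤ s₁ := Int.emod_nonneg _ (by omega)
    have hs1lt : s₁ < q := Int.emod_lt_of_pos _ hq
    have key : q ∣ p * s₁ - 2 := by
      have h2 : p * s₁ - 2 = (p * (2 * a) - 2) - p * (q * ((2 * a) / q)) := by
        rw [hs₁, Int.emod_def]; ring
      rw [h2]
      refine dvd_sub ⟨-2 * b, by linear_combination 2 * hab⟩ ⟨p * ((2 * a) / q), by ring⟩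
    set r₁ := (p * s₁ - 2) / q with hr₁
    have hqr : q * r₁ = p * s₁ - 2 := Int.mul_ediv_cancel' key
    have hs1pos : 0 < s₁ := by
      rcases eq_or_lt_of_le hs1nonneg with h | h
      · exfalso
        have : q ∣ 2 := by
          have : q ∣ -(p * 0 - 2) := dvd_neg.mpr (h ▸ key)
          simpa using this
        have := Int.le_of_dvd (by norm_num) this
        omega
      · exact h
    have hr1nonneg : 0 ≤ r₁ := by
      by_contra h
      push_neg at h
      have h1 : q * r₁ ≤ q * (-1) := mul_le_mul_of_nonneg_left (by omega) hq.le
      nlinarith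
    have hr1lt : r₁ < p := by
      by_contra h
      push_neg at h
      have h1 : q * p ≤ q * r₁ := mul_le_mul_of_nonneg_left h hq.le
      nlinarith
    have hr1even : 2 ∣ r₁ := by
      have h2 : (2:ℤ) ∣ q * r₁ := by
        rw [hqr]
        exact dvd_sub (hp2.mul_right s₁) (by norm_num)
      rcases (Int.Prime.dvd_mul' Nat.prime_two h2) with h | h
      · exact absurd h hqodd
      · exact h
    have gcd_one : ∀ r s : ℤ, 0 < s → ¬ (2:ℤ) ∣ s →
        (p * s - r * q = 2 ∨ p * s - r * q = -2) → Int.gcd r s = 1 := by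
      intro r s hs hsodd heq
      have hd1 : (Int.gcd r s : ℤ) ∣ r := Int.gcd_dvd_left r s
      have hd2 : (Int.gcd r s : ℤ) ∣ s := Int.gcd_dvd_right r s
      have hd : (Int.gcd r s : ℤ) ∣ p * s - r * q := dvd_sub (hd2.mul_left p) (hd1.mul_right q)
      have hd2' : (Int.gcd r s : ℤ) ∣ 2 := by
        rcases heq with h | h
        · rwa [h] at hd
        · rw [h] at hd; simpa using dvd_neg.mpr hd
      have hdle : (Int.gcd r s : ℤ) ≤ 2 := Int.le_of_dvd (by norm_num) hd2'
      have hne : Int.gcd r s ≠ 0 := by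
        intro h0
        rw [Int.gcd_eq_zero_iff] at h0
        omega
      have hnodd : ¬ (2:ℕ) ∣ Int.gcd r s := by
        intro h2'
        have : (2:ℤ) ∣ (Int.gcd r s : ℤ) := by exact_mod_cast Int.natCast_dvd_natCast.mpr h2'
        exact hsodd (this.trans hd2)
      omega
    by_cases hpar : (2:ℤ) ∣ s₁
    · have heq : p * (q - s₁) - (p - r₁) * q = -2 := by linear_combination hqr
      refine ⟨p - r₁, q - s₁, by omega, by omega, ?_, ?_, ?_⟩
      · exact gcd_one (p - r₁) (q - s₁) (by omega) (by omega) (Or.inr heq)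
      · rw [heq]; norm_num
      · rw [abs_of_nonneg (by omega : (0:ℤ) ≤ p - r₁)]; omega
    · have heq : p * s₁ - r₁ * q = 2 := by linear_combination -hqr
      refine ⟨r₁, s₁, hs1pos, hr1even, ?_, ?_, ?_⟩
      · exact gcd_one r₁ s₁ hs1pos hpar (Or.inl heq)
      · rw [heq]; norm_num
      · rw [abs_of_nonneg hr1nonneg]; omega

abbrev V := {x : ℚ // (2 : ℤ) ∣ x.num}

/-- weight of a vertex -/
def wt (x : V) : ℕ := x.1.num.natAbs + x.1.den

lemma den_odd (x : V) : ¬ (2:ℤ) ∣ (x.1.den : ℤ) := by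
  intro h
  have h2 : (2:ℕ) ∣ x.1.den := by exact_mod_cast h
  have hnum : (2:ℕ) ∣ x.1.num.natAbs := by
    have := Int.natAbs_dvd_natAbs.mpr x.2
    simpa using this
  have := Nat.Coprime.eq_one_of_dvd (x.1.reduced.coprime_dvd_left hnum) h2
  omega

lemma den_pos' (x : V) : 0 < ((x.1.den : ℤ)) := by exact_mod_cast x.1.pos

lemma cop (x : V) : IsCoprime x.1.num ((x.1.den : ℤ)) := by
  rw [Int.isCoprime_iff_gcd_eq_one, Int.gcd_def, Int.natAbs_natCast]
  exact x.1.reduced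

lemma vertex_unique (x y z : V) (hxy : D2.Adj x y) (hxz : D2.Adj x z)
    (h1 : wt y ≤ wt x) (h2 : wt z ≤ wt x) : y = z := by
  by_cases h0 : x.1.num = 0
  · exfalso
    have hx0 : x.1 = 0 := Rat.num_eq_zero.mp h0
    have hden : x.1.den = 1 := by rw [hx0]; rfl
    have hadj : |y.1.num| = 2 := by
      have := hxy
      simp only [D2, h0, hden] at this
      simpa using this
    have : y.1.num.natAbs = 2 := by
      have : ((y.1.num.natAbs : ℤ)) = 2 := by rw [Int.natCast_natAbs]; exact hadj
      exact_mod_cast this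
    have hwy : 3 ≤ wt y := by
      have := y.1.pos
      unfold wt
      omega
    have hwx : wt x = 1 := by unfold wt; rw [h0, hden]; rfl
    omega
  · have key := unique_small x.1.num (x.1.den : ℤ) y.1.num (y.1.den : ℤ)
      z.1.num (z.1.den : ℤ) x.2 h0 (den_pos' x) (den_odd x) (cop x)
      (den_pos' y) (den_odd y) (den_pos' z) (den_odd z)
      hxy hxz ?_ ?_
    · obtain ⟨hn, hd⟩ := key
      refine Subtype.ext (Rat.ext hn ?_)
      exact_mod_cast hd
    · have := h1
      unfold wt at this
      rw [Int.abs_eq_natAbs, Int.abs_eq_natAbs]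
      omega
    · have := h2
      unfold wt at this
      rw [Int.abs_eq_natAbs, Int.abs_eq_natAbs]
      omega

lemma vertex_exists (x : V) (hx : x.1.num ≠ 0) :
    ∃ y : V, D2.Adj x y ∧ wt y < wt x := by
  set p := x.1.num with hp
  set q := ((x.1.den : ℤ)) with hq
  have hqpos : 0 < q := den_pos' x
  have hqodd : ¬ (2:ℤ) ∣ q := den_odd x
  have hcop : IsCoprime p q := cop x
  have main : ∃ r s : ℤ, 0 < s ∧ 2 ∣ r ∧ Int.gcd r s = 1 ∧
      |p * s - r * q| = 2 ∧ |r| + s < |p| + q := by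
    rcases lt_or_gt_of_ne hx with hneg | hpos
    · obtain ⟨r, s, h1, h2, h3, h4, h5⟩ :=
        exists_small_pos (-p) q (by exact (dvd_neg).mpr x.2) (by omega) hqpos hqodd hcop.neg_left
      refine ⟨-r, s, h1, by omega, ?_, ?_, ?_⟩
      · rwa [Int.gcd_def, Int.natAbs_neg, ← Int.gcd_def]
      · rw [show p * s - -r * q = -((-p) * s - r * q) by ring, abs_neg]; exact h4
      · rw [abs_neg]
        rwa [abs_of_neg hneg]
    · obtain ⟨r, s, h1, h2, h3, h4, h5⟩ :=
        exists_small_pos p q x.2 hpos hqpos hqodd hcop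
      exact ⟨r, s, h1, h2, h3, h4, by rwa [abs_of_pos hpos]⟩
  obtain ⟨r, s, hs, hr2, hgcd, habs, hlt⟩ := main
  have hsnat : s.toNat ≠ 0 := by omega
  have hreduced : r.natAbs.Coprime s.toNat := by
    have h1 : s.natAbs = s.toNat := by omega
    rw [Nat.Coprime, ← h1]
    exact hgcd
  refine ⟨⟨⟨r, s.toNat, hsnat, hreduced⟩, hr2⟩, ?_, ?_⟩
  · show |p * ((s.toNat : ℕ) : ℤ) - r * q| = 2
    rwa [show (((s.toNat : ℕ)) : ℤ) = s by omega]
  · show r.natAbs + s.toNat < wt x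
    unfold wt
    rw [Int.abs_eq_natAbs, Int.abs_eq_natAbs] at hlt
    omega

def v0 : V := ⟨0, by simp⟩

lemma reach (x : V) : D2.Reachable x v0 := by
  have H : ∀ n (x : V), wt x = n → D2.Reachable x v0 := by
    intro n
    induction n using Nat.strong_induction_on with
    | _ n ih =>
      intro x hx
      by_cases h0 : x.1.num = 0
      · have : x = v0 := Subtype.ext (Rat.num_eq_zero.mp h0)
        rw [this]
      · obtain ⟨y, hadj, hlt⟩ := vertex_exists x h0
        exact (hadj.reachable).trans (ih (wt y) (hx ▸ hlt) y rfl)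
  exact H (wt x) x rfl

lemma first_edge {V' : Type*} {G : SimpleGraph V'} {u v : V'} (w : G.Walk u v)
    (hw : ¬ w.Nil) : s(u, w.getVert 1) ∈ w.edges := by
  cases w with
  | nil => simp at hw
  | cons h p => simp [SimpleGraph.Walk.getVert_cons_succ]

lemma acyclic : D2.IsAcyclic := by
  intro v c hc
  obtain ⟨u, hu, hmax⟩ := Finset.exists_max_image c.support.toFinset wt
    ⟨v, List.mem_toFinset.mpr c.start_mem_support⟩
  replace hu := List.mem_toFinset.mp hu
  have hmax' : ∀ w ∈ (c.rotate u hu).support, wt w ≤ wt u := by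
    intro w hw
    rw [SimpleGraph.Walk.support_eq_cons] at hw
    rcases List.mem_cons.mp hw with rfl | hw
    · exact le_refl _
    · exact hmax w (List.mem_toFinset.mpr
        (List.mem_of_mem_tail ((SimpleGraph.Walk.support_rotate c u hu).mem_iff.mp hw)))
  have key : ∀ (u : V) (c : D2.Walk u u), c.IsCycle →
      (∀ w ∈ c.support, wt w ≤ wt u) → False := by
    clear hmax hmax' hu hc c v
    intro u c hc hmax
    cases c with
    | nil => exact hc.ne_nil rfl
    | @cons _ a _ h p =>
      have hlen : 2 ≤ p.length := by
        have := hc.three_le_length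
        simpa using this
      rw [SimpleGraph.Walk.cons_isCycle_iff] at hc
      have hpnil : ¬ p.reverse.Nil := by
        rw [SimpleGraph.Walk.not_nil_iff_lt_length, SimpleGraph.Walk.length_reverse]
        omega
      set b := p.reverse.getVert 1 with hb
      have hub : D2.Adj u b := SimpleGraph.Walk.adj_snd hpnil
      have hbmem : b ∈ p.support := by
        have : b ∈ p.reverse.support := SimpleGraph.Walk.mem_support_iff_exists_getVert.mpr
          ⟨1, rfl, by rw [SimpleGraph.Walk.length_reverse]; omega⟩
        rwa [SimpleGraph.Walk.support_reverse, List.mem_reverse] at this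
      have hamem : a ∈ p.support := p.start_mem_support
      have hab : a = b := by
        refine vertex_unique u a b h hub ?_ ?_
        · exact hmax a (by simp [SimpleGraph.Walk.support_cons, hamem])
        · exact hmax b (by simp [SimpleGraph.Walk.support_cons, hbmem])
      have hedge : s(u, b) ∈ p.reverse.edges := first_edge p.reverse hpnil
      rw [SimpleGraph.Walk.edges_reverse, List.mem_reverse] at hedge
      rw [← hab] at hedge
      exact hc.2 hedge
  exact key u (c.rotate u hu) (hc.rotate hu) hmax'

end D2Aux

/-- The graph `𝔻₂` is a tree: it is connected and contains no cycle. -/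
theorem D2_isTree : D2.IsTree := by
  constructor
  · rw [SimpleGraph.connected_iff]
    refine ⟨fun a b => (D2Aux.reach a).trans (D2Aux.reach b).symm, ⟨D2Aux.v0⟩⟩
  · exact D2Aux.acyclic
end
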